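/- For the kernel 𝒫 on ℂⁿ and curvature constants R_{km̄ℓq̄} with Kähler symmetries, the operator a := (1/6) b_m b_q R_{km̄ℓq̄} z_k z_ℓ (sum over repeated indices) satisfies (a𝒫)(0,Z) = (1/6) r 𝒫(0,Z), where r = 8 R_{mm̄qq̄}; and the operator c := -(π/3) b_q R_{km̄ℓq̄} z_k z_ℓ z̄'_m satisfies (c𝒫)(0,Z) = 0. -/

import Mathlib

open Complex MeasureTheory
open scoped Real ComplexConjugate

noncomputable section

/-- Wirtinger derivative ∂/∂z_i on ℂⁿ. -/
def wdz {n : ℕ} (i : Fin n) (f : (Fin n → ℂ) → ℂ) (z : Fin n → ℂ) : ℂ :=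
  (1 / 2) * (fderiv ℝ f z (Pi.single i 1) - Complex.I * fderiv ℝ f z (Pi.single i Complex.I))

/-- Wirtinger derivative ∂/∂z̄_i on ℂⁿ. -/
def wdzbar {n : ℕ} (i : Fin n) (f : (Fin n → ℂ) → ℂ) (z : Fin n → ℂ) : ℂ :=
  (1 / 2) * (fderiv ℝ f z (Pi.single i 1) + Complex.I * fderiv ℝ f z (Pi.single i Complex.I))

/-- The operator b_i = -2 ∂/∂z_i + π z̄_i. -/
def bOp {n : ℕ} (i : Fin n) (f : (Fin n → ℂ) → ℂ) (z : Fin n → ℂ) : ℂ :=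
  -2 * wdz i f z + (π : ℂ) * conj (z i) * f z

/-- The operator b_i⁺ = 2 ∂/∂z̄_i + π z_i. -/
def bPlus {n : ℕ} (i : Fin n) (f : (Fin n → ℂ) → ℂ) (z : Fin n → ℂ) : ℂ :=
  2 * wdzbar i f z + (π : ℂ) * z i * f z

/-- The kernel 𝒫(Z,Z') = exp(-π/2(|z|² + |z'|² - 2 z·z̄')). -/
def Pker {n : ℕ} (Z Z' : Fin n → ℂ) : ℂ :=
  Complex.exp (-((π : ℂ) / 2) *
    ((∑ i, (Complex.normSq (Z i) : ℂ)) + (∑ i, (Complex.normSq (Z' i) : ℂ))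
      - 2 * ∑ i, Z i * conj (Z' i)))

/-!
Write `𝒫(·, Z') = exp φ`. Since `∂φ/∂z_q = -(π/2)(z̄_q - 2 z̄'_q)`, the operator `b_q` acts on `f 𝒫` as
`b_q (f 𝒫) = (-2 ∂f/∂z_q + 2π (z̄_q - z̄'_q) f) 𝒫` for every differentiable `f`. For `f = z_k z_ℓ`,
which vanishes to second order at `0`, one application of `b` vanishes at `Z = 0`, while two give
`b_m b_q (z_k z_ℓ 𝒫)(0) = 4 (δ_kq δ_ℓm + δ_km δ_ℓq) 𝒫(0, Z')`. Contracting with `R` and using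
`R_{qm̄mq̄} = R_{mm̄qq̄}` gives `8 Σ R_{mm̄qq̄} 𝒫(0, Z')`.
-/

section

variable {n : ℕ}

section Wirtinger

variable {f g : (Fin n → ℂ) → ℂ} {w : Fin n → ℂ} (i : Fin n)

theorem wdz_add (hf : DifferentiableAt ℝ f w) (hg : DifferentiableAt ℝ g w) :
    wdz i (fun w => f w + g w) w = wdz i f w + wdz i g w := by
  simp only [wdz, fderiv_fun_add hf hg, add_apply]
  ring

theorem wdz_sub (hf : DifferentiableAt ℝ f w) (hg : DifferentiableAt ℝ g w) :
    wdz i (fun w => f w - g w) w = wdz i f w - wdz i g w := by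
  simp only [wdz, fderiv_fun_sub hf hg, sub_apply]
  ring

theorem wdz_mul (hf : DifferentiableAt ℝ f w) (hg : DifferentiableAt ℝ g w) :
    wdz i (fun w => f w * g w) w = wdz i f w * g w + f w * wdz i g w := by
  simp only [wdz, fderiv_fun_mul hf hg, add_apply, smul_apply, smul_eq_mul]
  ring

theorem wdz_sum {ι : Type*} (s : Finset ι) {F : ι → (Fin n → ℂ) → ℂ}
    (hF : ∀ j ∈ s, DifferentiableAt ℝ (F j) w) :
    wdz i (fun w => ∑ j ∈ s, F j w) w = ∑ j ∈ s, wdz i (F j) w := by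
  simp only [wdz, fderiv_fun_sum hF, sum_apply, Finset.mul_sum,
    ← Finset.sum_sub_distrib]

theorem wdz_const (c : ℂ) : wdz i (fun _ => c) w = 0 := by
  simp [wdz]

theorem wdz_cexp (hf : DifferentiableAt ℝ f w) :
    wdz i (fun w => Complex.exp (f w)) w = Complex.exp (f w) * wdz i f w := by
  simp only [wdz, hf.hasFDerivAt.cexp.fderiv, smul_apply, smul_eq_mul]
  ring

theorem wdz_apply (j : Fin n) : wdz i (fun w => w j) w = if j = i then 1 else 0 := by
  have : fderiv ℝ (fun w : Fin n → ℂ => w j) w = ContinuousLinearMap.proj (R := ℝ) j :=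
    (ContinuousLinearMap.proj (R := ℝ) (φ := fun _ : Fin n => ℂ) j).fderiv
  rcases eq_or_ne j i with rfl | h
  · norm_num [wdz, this]
  · simp [wdz, this, h]

theorem wdz_conj_apply (j : Fin n) : wdz i (fun w => conj (w j)) w = 0 := by
  have : fderiv ℝ (fun w : Fin n → ℂ => conj (w j)) w =
      conjCLE.toContinuousLinearMap.comp (ContinuousLinearMap.proj (R := ℝ) j) :=
    (conjCLE.toContinuousLinearMap.comp
      (ContinuousLinearMap.proj (R := ℝ) (φ := fun _ : Fin n => ℂ) j)).fderiv
  rcases eq_or_ne j i with rfl | h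
  · simp [wdz, this]
  · simp [wdz, this, h]

end Wirtinger

theorem Pker_eq_cexp (w Z' : Fin n → ℂ) : Pker w Z' = Complex.exp (-((π : ℂ) / 2) *
    ((∑ i, w i * conj (w i)) + (∑ i, (Complex.normSq (Z' i) : ℂ)) - 2 * ∑ i, w i * conj (Z' i))) := by
  simp only [Pker, mul_conj]

theorem differentiableAt_Pker (Z' w : Fin n → ℂ) : DifferentiableAt ℝ (fun w => Pker w Z') w := by
  simp only [Pker_eq_cexp]
  fun_prop

theorem wdz_Pker (q : Fin n) (Z' w : Fin n → ℂ) :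
    wdz q (fun w => Pker w Z') w = -((π : ℂ) / 2) * (conj (w q) - 2 * conj (Z' q)) * Pker w Z' := by
  simp only [Pker_eq_cexp]
  rw [wdz_cexp _ (by fun_prop)]
  simp (disch := intros; fun_prop) only [wdz_mul, wdz_sub, wdz_add, wdz_sum, wdz_const,
    wdz_apply, wdz_conj_apply]
  simp only [neg_mul, zero_mul, ite_mul, one_mul, mul_zero, add_zero, Finset.sum_ite_eq',
    Finset.mem_univ, ↓reduceIte, Finset.sum_const_zero, zero_add, mul_neg, neg_inj]
  ring

theorem bOp_mul_Pker {f : (Fin n → ℂ) → ℂ} {w : Fin n → ℂ} (hf : DifferentiableAt ℝ f w)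
    (q : Fin n) (Z' : Fin n → ℂ) :
    bOp q (fun w => f w * Pker w Z') w =
      (-2 * wdz q f w + 2 * π * (conj (w q) - conj (Z' q)) * f w) * Pker w Z' := by
  rw [bOp, wdz_mul q hf (differentiableAt_Pker Z' w), wdz_Pker]
  ring

theorem wdz_apply_mul_apply (q k l : Fin n) (w : Fin n → ℂ) :
    wdz q (fun w => w k * w l) w =
      (if k = q then 1 else 0) * w l + w k * (if l = q then 1 else 0) := by
  rw [wdz_mul q (by fun_prop) (by fun_prop), wdz_apply, wdz_apply]

theorem bOp_quadratic_Pker_zero (q k l : Fin n) (Z' : Fin n → ℂ) :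
    bOp q (fun w => w k * w l * Pker w Z') 0 = 0 := by
  rw [bOp_mul_Pker (by fun_prop), wdz_apply_mul_apply]
  simp

theorem bOp_bOp_quadratic_Pker_zero (m q k l : Fin n) (Z' : Fin n → ℂ) :
    bOp m (bOp q (fun w => w k * w l * Pker w Z')) 0 =
      4 * ((if k = q then 1 else 0) * (if l = m then 1 else 0)
        + (if k = m then 1 else 0) * (if l = q then 1 else 0)) * Pker 0 Z' := by
  have hq : bOp q (fun w => w k * w l * Pker w Z') = fun w =>
      (-2 * ((if k = q then 1 else 0) * w l + w k * (if l = q then 1 else 0))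
        + 2 * π * (conj (w q) - conj (Z' q)) * (w k * w l)) * Pker w Z' := by
    ext w
    rw [bOp_mul_Pker (by fun_prop), wdz_apply_mul_apply]
  rw [hq, bOp_mul_Pker (by fun_prop)]
  simp (disch := fun_prop) only [wdz_mul, wdz_sub, wdz_add, wdz_const, wdz_apply, wdz_conj_apply]
  simp only [Pi.zero_apply, map_zero]
  ring

end

theorem aterm_cterm_kernel_values_general {n : ℕ} (R : Fin n → Fin n → Fin n → Fin n → ℂ)
    (hsym1 : ∀ k m l q, R k m l q = R l m k q)
    (Z' : Fin n → ℂ) :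
    ((1 / 6 : ℂ) * ∑ m, ∑ q, ∑ k, ∑ l,
        R k m l q * bOp m (bOp q (fun w => w k * w l * Pker w Z')) (0 : Fin n → ℂ)
      = (1 / 6 : ℂ) * (8 * ∑ m, ∑ q, R m m q q) * Pker (0 : Fin n → ℂ) Z') ∧
    (-((π : ℂ) / 3) * ∑ q, ∑ m, ∑ k, ∑ l,
        R k m l q * conj (Z' m) * bOp q (fun w => w k * w l * Pker w Z') (0 : Fin n → ℂ)
      = 0) := by
  refine ⟨?_, by simp only [bOp_quadratic_Pker_zero, mul_zero, Finset.sum_const_zero]⟩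
  have hcontract : ∀ m q, ∑ k, ∑ l, R k m l q * bOp m (bOp q (fun w => w k * w l * Pker w Z')) 0
      = 8 * R m m q q * Pker 0 Z' := by
    intro m q
    simp only [bOp_bOp_quadratic_Pker_zero, mul_add, add_mul, Finset.sum_add_distrib]
    simp only [mul_ite, mul_one, mul_zero, ite_mul, zero_mul, Finset.sum_ite_eq', Finset.mem_univ,
      ↓reduceIte, hsym1 q m m q]
    ring
  simp only [hcontract, ← Finset.sum_mul, ← Finset.mul_sum]
  ring

/-- For curvature constants R_{km̄ℓq̄} with the Kähler symmetries and r = 8 Σ R_{mm̄qq̄}: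
the operator a = (1/6) b_m b_q R_{km̄ℓq̄} z_k z_ℓ satisfies (a𝒫)(0,Z) = (1/6) r 𝒫(0,Z),
and the operator c = -(π/3) b_q R_{km̄ℓq̄} z_k z_ℓ z̄'_m satisfies (c𝒫)(0,Z) = 0. -/
theorem aterm_cterm_kernel_values {n : ℕ} (R : Fin n → Fin n → Fin n → Fin n → ℂ)
    (hsym1 : ∀ k m l q, R k m l q = R l m k q)
    (hsym2 : ∀ k m l q, R k m l q = R k q l m)
    (Z' : Fin n → ℂ) :
    ((1 / 6 : ℂ) * ∑ m, ∑ q, ∑ k, ∑ l,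
        R k m l q * bOp m (bOp q (fun w => w k * w l * Pker w Z')) (0 : Fin n → ℂ)
      = (1 / 6 : ℂ) * (8 * ∑ m, ∑ q, R m m q q) * Pker (0 : Fin n → ℂ) Z') ∧
    (-((π : ℂ) / 3) * ∑ q, ∑ m, ∑ k, ∑ l,
        R k m l q * conj (Z' m) * bOp q (fun w => w k * w l * Pker w Z') (0 : Fin n → ℂ)
      = 0) :=
  aterm_cterm_kernel_values_general R hsym1 Z'
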